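/- Suppose (k + d)(2λ_j + k − d) > 0 and d ≠ λ_j for all j = 1,…,p, and let β ∈ ℝ^p. Then MMSE_AULTE − MMSE_MAULTE is positive definite if and only if b_MAULTEᵀ (S₃ + b_AULTE b_AULTEᵀ)⁻¹ b_MAULTE < 1, where S₃ = Cov_AULTE − Cov_MAULTE. -/

import Mathlib

open Matrix

/-- Covariance matrix of the Liu-type estimator (LTE). -/
noncomputable def covLTE {p : ℕ} (V : Matrix (Fin p) (Fin p) ℝ) (k d : ℝ) :
    Matrix (Fin p) (Fin p) ℝ :=
  (V + k • 1)⁻¹ * (V - d • 1) * V⁻¹ * (V - d • 1) * (V + k • 1)⁻¹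

/-- Covariance matrix of the almost unbiased Liu-type estimator (AULTE). -/
noncomputable def covAULTE {p : ℕ} (V : Matrix (Fin p) (Fin p) ℝ) (k d : ℝ) :
    Matrix (Fin p) (Fin p) ℝ :=
  (1 - (k + d) ^ 2 • ((V + k • 1)⁻¹) ^ 2) * V⁻¹ * (1 - (k + d) ^ 2 • ((V + k • 1)⁻¹) ^ 2)

/-- The matrix `M` entering the modified almost unbiased Liu-type estimator (MAULTE). -/
noncomputable def mMAULTE {p : ℕ} (V : Matrix (Fin p) (Fin p) ℝ) (k d : ℝ) :
    Matrix (Fin p) (Fin p) ℝ :=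
  (1 - (k + d) ^ 2 • ((V + k • 1)⁻¹) ^ 2) * (1 - (k + d) • (V + k • 1)⁻¹)

/-- Covariance matrix of the MAULTE. -/
noncomputable def covMAULTE {p : ℕ} (V : Matrix (Fin p) (Fin p) ℝ) (k d : ℝ) :
    Matrix (Fin p) (Fin p) ℝ :=
  mMAULTE V k d * V⁻¹ * (mMAULTE V k d)ᵀ

/-- Bias vector of the LTE. -/
noncomputable def biasLTE {p : ℕ} (V : Matrix (Fin p) (Fin p) ℝ) (k d : ℝ) (β : Fin p → ℝ) :
    Fin p → ℝ :=
  (-(d + k)) • ((V + k • 1)⁻¹ *ᵥ β)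

/-- Bias vector of the AULTE. -/
noncomputable def biasAULTE {p : ℕ} (V : Matrix (Fin p) (Fin p) ℝ) (k d : ℝ) (β : Fin p → ℝ) :
    Fin p → ℝ :=
  (-(d + k) ^ 2) • (((V + k • 1)⁻¹) ^ 2 *ᵥ β)

/-- Bias vector of the MAULTE. -/
noncomputable def biasMAULTE {p : ℕ} (V : Matrix (Fin p) (Fin p) ℝ) (k d : ℝ) (β : Fin p → ℝ) :
    Fin p → ℝ :=
  (-(d + k)) •
    (((1 + (d + k) • (V + k • 1)⁻¹ - (d + k) ^ 2 • ((V + k • 1)⁻¹) ^ 2) * (V + k • 1)⁻¹) *ᵥ β)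

/-- Matrix mean squared error built from a covariance matrix and a bias vector. -/
noncomputable def mmse {p : ℕ} (C : Matrix (Fin p) (Fin p) ℝ) (b : Fin p → ℝ) :
    Matrix (Fin p) (Fin p) ℝ :=
  C + vecMulVec b b

/-!
The covariance gap `S₃ = Cov_AULTE - Cov_MAULTE` is a function of `V = Q Λ Qᵀ`, so it is
`Q D Qᵀ` for a diagonal `D` whose `j`-th entry is `a_j² c_j (2 - c_j) / λ_j`, where
`c_j = (k + d) / (λ_j + k)` and `a_j = 1 - c_j²`. The hypotheses make `c_j (2 - c_j) > 0` and
`a_j ≠ 0`, so `S₃` is positive definite, hence so is `N = S₃ + b_AULTE b_AULTEᵀ`. The MMSE gap is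
the rank-one downdate `N - b_MAULTE b_MAULTEᵀ`, and by Cauchy–Schwarz for the inner product
defined by `N`, such a downdate `N - b bᵀ` is positive definite exactly when `bᵀ N⁻¹ b < 1`.
-/

namespace Matrix

variable {n : Type*} [DecidableEq n]

theorem diagonal_add_smul_one {α : Type*} [Semiring α] (v : n → α) (k : α) :
    diagonal v + k • (1 : Matrix n n α) = diagonal fun j => v j + k := by
  rw [smul_one_eq_diagonal, diagonal_add]

variable [Fintype n]

theorem inv_diagonal_of_ne_zero {K : Type*} [Field K] {v : n → K} (hv : ∀ j, v j ≠ 0) :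
    (diagonal v)⁻¹ = diagonal v⁻¹ := by
  refine inv_eq_right_inv ?_
  rw [diagonal_mul_diagonal, ← diagonal_one]
  exact congrArg diagonal (funext fun j => mul_inv_cancel₀ (hv j))

theorem inv_conj_of_mul_transpose_eq_one {α : Type*} [CommRing α] {Q : Matrix n n α}
    (hQ : Q * Qᵀ = 1) (A : Matrix n n α) :
    (Q * A * Qᵀ)⁻¹ = Q * A⁻¹ * Qᵀ := by
  rw [mul_inv_rev, mul_inv_rev, inv_eq_right_inv hQ, inv_eq_left_inv hQ, Matrix.mul_assoc]

theorem sq_dotProduct_le_of_posDef {N : Matrix n n ℝ} (hN : N.PosDef) (b x : n → ℝ) :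
    (b ⬝ᵥ x) ^ 2 ≤ (b ⬝ᵥ N⁻¹ *ᵥ b) * (x ⬝ᵥ N *ᵥ x) := by
  set y := N⁻¹ *ᵥ b
  have hNy : N *ᵥ y = b := by
    rw [mulVec_mulVec, mul_nonsing_inv _ ((isUnit_iff_isUnit_det N).mp hN.isUnit), one_mulVec]
  have hyN : ∀ z, y ⬝ᵥ N *ᵥ z = b ⬝ᵥ z := fun z => by
    rw [dotProduct_mulVec, ← mulVec_transpose, ← conjTranspose_eq_transpose_of_trivial,
      hN.isHermitian.eq, hNy]
  -- `t ↦ (x + t y)ᵀ N (x + t y)` is a nonnegative quadratic, so its discriminant is `≤ 0`.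
  have hquad : ∀ t : ℝ, 0 ≤ (b ⬝ᵥ y) * (t * t) + 2 * (b ⬝ᵥ x) * t + x ⬝ᵥ N *ᵥ x := fun t => by
    have := hN.posSemidef.dotProduct_mulVec_nonneg (x + t • y)
    simp only [star_trivial, mulVec_add, mulVec_smul, add_dotProduct, dotProduct_add,
      smul_dotProduct, dotProduct_smul, hyN, hNy, smul_eq_mul, dotProduct_comm x b,
      dotProduct_comm y b] at this
    linear_combination this
  have := discrim_le_zero hquad
  rw [discrim] at this
  linarith

theorem posDef_sub_vecMulVec_iff {N : Matrix n n ℝ} (hN : N.PosDef) (b : n → ℝ) :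
    (N - vecMulVec b b).PosDef ↔ b ⬝ᵥ N⁻¹ *ᵥ b < 1 := by
  have hquad : ∀ x, star x ⬝ᵥ (N - vecMulVec b b) *ᵥ x = x ⬝ᵥ N *ᵥ x - (b ⬝ᵥ x) ^ 2 :=
    fun x => by
      rw [star_trivial, sub_mulVec, dotProduct_sub, dotProduct_mulVec x (vecMulVec b b),
        vecMul_vecMulVec, smul_dotProduct, smul_eq_mul, dotProduct_comm x b, sq]
  have hNb : N *ᵥ N⁻¹ *ᵥ b = b := by
    rw [mulVec_mulVec, mul_nonsing_inv _ ((isUnit_iff_isUnit_det N).mp hN.isUnit), one_mulVec]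
  constructor
  · intro hP
    obtain rfl | hb := eq_or_ne b 0
    · simp
    have hy : N⁻¹ *ᵥ b ≠ 0 := fun h0 => hb (by rw [← hNb, h0, mulVec_zero])
    have := hP.dotProduct_mulVec_pos hy
    rw [hquad, hNb, dotProduct_comm _ b] at this
    nlinarith
  · intro h1
    refine .of_dotProduct_mulVec_pos
      (hN.isHermitian.sub (posSemidef_vecMulVec_self_star b).isHermitian) fun x hx => ?_
    have hxN : 0 < x ⬝ᵥ N *ᵥ x := by simpa using hN.dotProduct_mulVec_pos hx
    have ht : 0 ≤ b ⬝ᵥ N⁻¹ *ᵥ b := by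
      simpa using hN.inv.posSemidef.dotProduct_mulVec_nonneg b
    rw [hquad]
    nlinarith [sq_dotProduct_le_of_posDef hN b x]

section OrthogonalConj

variable {Q : Matrix n n ℝ}

noncomputable def orthogonalConj (hQ : Q * Qᵀ = 1) : Matrix n n ℝ ≃⋆ₐ[ℝ] Matrix n n ℝ :=
  Unitary.conjStarAlgAut ℝ _ ⟨Q, (mem_orthogonalGroup_iff n ℝ).mpr hQ⟩

theorem orthogonalConj_apply (hQ : Q * Qᵀ = 1) (A : Matrix n n ℝ) :
    orthogonalConj hQ A = Q * A * Qᵀ :=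
  rfl

theorem orthogonalConj_inv (hQ : Q * Qᵀ = 1) (A : Matrix n n ℝ) :
    orthogonalConj hQ A⁻¹ = (orthogonalConj hQ A)⁻¹ := by
  simp only [orthogonalConj_apply, inv_conj_of_mul_transpose_eq_one hQ]

theorem orthogonalConj_transpose (hQ : Q * Qᵀ = 1) (A : Matrix n n ℝ) :
    orthogonalConj hQ Aᵀ = (orthogonalConj hQ A)ᵀ := by
  simpa only [star_eq_conjTranspose, conjTranspose_eq_transpose_of_trivial] using
    map_star (orthogonalConj hQ) A

end OrthogonalConj

end Matrix

section Spectral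

variable {p : ℕ}

theorem covAULTE_conj {Q : Matrix (Fin p) (Fin p) ℝ} (hQ : Q * Qᵀ = 1)
    (D : Matrix (Fin p) (Fin p) ℝ) (k d : ℝ) :
    covAULTE (Q * D * Qᵀ) k d = Q * covAULTE D k d * Qᵀ := by
  simp only [← orthogonalConj_apply hQ, covAULTE, map_mul, map_sub, map_pow, map_smul, map_one,
    map_add, orthogonalConj_inv]

theorem covMAULTE_conj {Q : Matrix (Fin p) (Fin p) ℝ} (hQ : Q * Qᵀ = 1)
    (D : Matrix (Fin p) (Fin p) ℝ) (k d : ℝ) :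
    covMAULTE (Q * D * Qᵀ) k d = Q * covMAULTE D k d * Qᵀ := by
  simp only [← orthogonalConj_apply hQ, covMAULTE, mMAULTE, map_mul, map_sub, map_pow, map_smul,
    map_one, map_add, orthogonalConj_inv, orthogonalConj_transpose]

variable {lam : Fin p → ℝ} {k : ℝ}

theorem covAULTE_diagonal (hlam : ∀ j, lam j ≠ 0) (hlamk : ∀ j, lam j + k ≠ 0) (d : ℝ) :
    covAULTE (diagonal lam) k d =
      diagonal fun j => (1 - ((k + d) / (lam j + k)) ^ 2) ^ 2 / lam j := by
  rw [covAULTE, diagonal_add_smul_one, inv_diagonal_of_ne_zero hlamk,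
    inv_diagonal_of_ne_zero hlam, diagonal_pow, ← diagonal_smul, ← diagonal_one, diagonal_sub,
    diagonal_mul_diagonal, diagonal_mul_diagonal]
  congr 1
  funext j
  simp only [Pi.smul_apply, Pi.pow_apply, Pi.inv_apply, smul_eq_mul]
  field_simp

theorem covMAULTE_diagonal (hlam : ∀ j, lam j ≠ 0) (hlamk : ∀ j, lam j + k ≠ 0) (d : ℝ) :
    covMAULTE (diagonal lam) k d =
      diagonal fun j =>
        ((1 - ((k + d) / (lam j + k)) ^ 2) * (1 - (k + d) / (lam j + k))) ^ 2 / lam j := by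
  rw [covMAULTE, mMAULTE, diagonal_add_smul_one, inv_diagonal_of_ne_zero hlamk,
    inv_diagonal_of_ne_zero hlam, diagonal_pow, ← diagonal_smul, ← diagonal_smul, ← diagonal_one,
    diagonal_sub, diagonal_sub, diagonal_mul_diagonal, diagonal_transpose, diagonal_mul_diagonal,
    diagonal_mul_diagonal]
  congr 1
  funext j
  simp only [Pi.smul_apply, Pi.pow_apply, Pi.inv_apply, smul_eq_mul]
  field_simp

end Spectral

theorem maulte_variance_lt_aulte_variance {l k d : ℝ} (hl : 0 < l) (hk : 0 < k)
    (h : 0 < (k + d) * (2 * l + k - d)) (hdl : d ≠ l) :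
    ((1 - ((k + d) / (l + k)) ^ 2) * (1 - (k + d) / (l + k))) ^ 2 / l <
      (1 - ((k + d) / (l + k)) ^ 2) ^ 2 / l := by
  have hlk : 0 < l + k := by linarith
  set c := (k + d) / (l + k) with hc_def
  have hc : 0 < c * (2 - c) := by
    have : c * (2 - c) = (k + d) * (2 * l + k - d) / (l + k) ^ 2 := by
      rw [hc_def]; field_simp; ring
    rw [this]; positivity
  have ha : 1 - c ^ 2 ≠ 0 := by
    have : 1 - c ^ 2 = (l - d) * (l + 2 * k + d) / (l + k) ^ 2 := by
      rw [hc_def]; field_simp; ring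
    rw [this]
    refine div_ne_zero (mul_ne_zero (sub_ne_zero.mpr hdl.symm) fun h0 => ?_) (by positivity)
    nlinarith
  calc ((1 - c ^ 2) * (1 - c)) ^ 2 / l = (1 - c ^ 2) ^ 2 * (1 - c * (2 - c)) / l := by ring
    _ < (1 - c ^ 2) ^ 2 / l := by
      gcongr
      exact mul_lt_of_lt_one_right (pow_two_pos_of_ne_zero ha) (by linarith)

theorem posDef_covAULTE_sub_covMAULTE {p : ℕ} {Q : Matrix (Fin p) (Fin p) ℝ}
    (hQ : Q * Qᵀ = 1) {lam : Fin p → ℝ} (hlam : ∀ j, 0 < lam j) {k d : ℝ} (hk : 0 < k)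
    (h : ∀ j, (k + d) * (2 * lam j + k - d) > 0) (hdl : ∀ j, d ≠ lam j) :
    (covAULTE (Q * diagonal lam * Qᵀ) k d - covMAULTE (Q * diagonal lam * Qᵀ) k d).PosDef := by
  have hlam0 : ∀ j, lam j ≠ 0 := fun j => (hlam j).ne'
  have hlamk : ∀ j, lam j + k ≠ 0 := fun j => (add_pos (hlam j) hk).ne'
  rw [covAULTE_conj hQ, covMAULTE_conj hQ, ← Matrix.sub_mul, ← Matrix.mul_sub,
    covAULTE_diagonal hlam0 hlamk, covMAULTE_diagonal hlam0 hlamk, diagonal_sub]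
  refine ((IsUnit.of_mul_eq_one Qᵀ hQ).posDef_star_right_conjugate_iff).mpr ?_
  exact posDef_diagonal_iff.mpr fun j =>
    sub_pos.mpr (maulte_variance_lt_aulte_variance (hlam j) hk (h j) (hdl j))

/-- MMSE comparison of AULTE and MAULTE. -/
theorem mmseAULTE_sub_mmseMAULTE_posDef_iff (p : ℕ) (Q : Matrix (Fin p) (Fin p) ℝ)
    (hQ : Q * Qᵀ = 1) (lam : Fin p → ℝ) (hlam : ∀ j, 0 < lam j) (k d : ℝ) (hk : 0 < k)
    (h : ∀ j, (k + d) * (2 * lam j + k - d) > 0) (hdl : ∀ j, d ≠ lam j) (β : Fin p → ℝ) :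
    (mmse (covAULTE (Q * Matrix.diagonal lam * Qᵀ) k d)
        (biasAULTE (Q * Matrix.diagonal lam * Qᵀ) k d β) -
      mmse (covMAULTE (Q * Matrix.diagonal lam * Qᵀ) k d)
        (biasMAULTE (Q * Matrix.diagonal lam * Qᵀ) k d β)).PosDef ↔
      biasMAULTE (Q * Matrix.diagonal lam * Qᵀ) k d β ⬝ᵥ
        ((covAULTE (Q * Matrix.diagonal lam * Qᵀ) k d -
            covMAULTE (Q * Matrix.diagonal lam * Qᵀ) k d) +
          Matrix.vecMulVec (biasAULTE (Q * Matrix.diagonal lam * Qᵀ) k d β)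
            (biasAULTE (Q * Matrix.diagonal lam * Qᵀ) k d β))⁻¹ *ᵥ
        biasMAULTE (Q * Matrix.diagonal lam * Qᵀ) k d β < 1 := by
  set V := Q * diagonal lam * Qᵀ
  set S := covAULTE V k d - covMAULTE V k d
  set bA := biasAULTE V k d β
  set bM := biasMAULTE V k d β
  have hN : (S + vecMulVec bA bA).PosDef :=
    (posDef_covAULTE_sub_covMAULTE hQ hlam hk h hdl).add_posSemidef
      (posSemidef_vecMulVec_self_star bA)
  have hgap : mmse (covAULTE V k d) bA - mmse (covMAULTE V k d) bM
      = S + vecMulVec bA bA - vecMulVec bM bM := by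
    simp only [S, mmse]
    abel
  rw [hgap]
  exact posDef_sub_vecMulVec_iff hN bM
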